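/- Let n ≥ 1 and let s : Fin n → EuclideanSpace ℝ (Fin n) be the centered standard simplex vertices, s i = e_i − (1/n)·∑_j e_j. Then the centroid map on nonempty finite subsets is injective: if A and B are nonempty finsets of Fin n and (1/|A|)·∑_{i ∈ A} s i = (1/|B|)·∑_{i ∈ B} s i, then A = B. (Hence representing each hyperedge of a hypergraph by the mean point of the vertices it relates is a faithful encoding.) -/

import Mathlib

/-!
Coordinate `k` of the centroid of `A` is `[k ∈ A] / |A| - 1/n`. Equal centroids therefore have
equal functions `k ↦ [k ∈ A] / |A|`, and such a function is positive exactly on `A`.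
-/

/-- The centered standard simplex vertices: `s i = e_i - (1/n) • ∑ j, e_j`,
where `e_i` is the standard basis of `EuclideanSpace ℝ (Fin n)`. -/
noncomputable def simplexPt (n : ℕ) (i : Fin n) : EuclideanSpace ℝ (Fin n) :=
  EuclideanSpace.single i (1 : ℝ) - ((1 : ℝ) / n) • ∑ j, EuclideanSpace.single j (1 : ℝ)

open Finset

section IndicatorDivCard

variable {α K : Type*} [DecidableEq α] [Field K] [LinearOrder K] [IsStrictOrderedRing K]
  {A B : Finset α} {k : α}

theorem Finset.mem_of_ite_div_card_eq
    (h : (if k ∈ A then (1 : K) else 0) / #A = (if k ∈ B then 1 else 0) / #B) (hk : k ∈ A) :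
    k ∈ B := by
  by_contra hkB
  have hA : (0 : K) < #A := by exact_mod_cast card_pos.mpr ⟨k, hk⟩
  simp only [hk, hkB, if_true, if_false, zero_div, one_div] at h
  exact (inv_pos.mpr hA).ne' h

theorem Finset.eq_of_ite_div_card_eq
    (h : ∀ k, (if k ∈ A then (1 : K) else 0) / #A = (if k ∈ B then 1 else 0) / #B) :
    A = B := by
  ext k
  exact ⟨mem_of_ite_div_card_eq (h k), mem_of_ite_div_card_eq (h k).symm⟩

end IndicatorDivCard

theorem simplexPt_apply (n : ℕ) (i k : Fin n) :
    simplexPt n i k = (if k = i then 1 else 0) - 1 / n := by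
  simp [simplexPt, PiLp.single_apply]

theorem simplexPt_centroid_apply {n : ℕ} {A : Finset (Fin n)} (hA : A.Nonempty) (k : Fin n) :
    (((1 : ℝ) / #A) • ∑ i ∈ A, simplexPt n i) k =
      (if k ∈ A then 1 else 0) / #A - 1 / n := by
  have hcard : (#A : ℝ) ≠ 0 := by exact_mod_cast hA.card_pos.ne'
  simp only [PiLp.smul_apply, WithLp.ofLp_sum, Finset.sum_apply, simplexPt_apply,
    sum_sub_distrib, sum_ite_eq, sum_const, nsmul_eq_mul, smul_eq_mul]
  field_simp

theorem centroid_injective_on_nonempty_finsets_general (n : ℕ)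
    (A B : Finset (Fin n)) (hA : A.Nonempty) (hB : B.Nonempty)
    (h : ((1 : ℝ) / A.card) • ∑ i ∈ A, simplexPt n i =
         ((1 : ℝ) / B.card) • ∑ i ∈ B, simplexPt n i) :
    A = B := by
  refine eq_of_ite_div_card_eq (K := ℝ) fun k => ?_
  have hk := congrArg (fun v : EuclideanSpace ℝ (Fin n) => v k) h
  simp only [simplexPt_centroid_apply hA, simplexPt_centroid_apply hB] at hk
  linarith

theorem centroid_injective_on_nonempty_finsets (n : ℕ) (hn : 1 ≤ n)
    (A B : Finset (Fin n)) (hA : A.Nonempty) (hB : B.Nonempty)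
    (h : ((1 : ℝ) / A.card) • ∑ i ∈ A, simplexPt n i =
         ((1 : ℝ) / B.card) • ∑ i ∈ B, simplexPt n i) :
    A = B :=
  centroid_injective_on_nonempty_finsets_general n A B hA hB h
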